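/- For every k ≥ 2, the k × k grid graph Grid(k) has pathwidth exactly k. -/

import Mathlib

/-- A tree decomposition of a simple graph `G` on vertex type `V`, with bags indexed by the
nodes of a finite tree `T` on `Fin n`: every vertex is in some bag, every edge has both
endpoints in some bag, and for each vertex the set of nodes whose bag contains it induces a
connected (hence subtree) subgraph of `T`. -/
def IsTreeDecomp {V : Type} (G : SimpleGraph V) {n : ℕ}
    (T : SimpleGraph (Fin n)) (bag : Fin n → Finset V) : Prop :=
  T.IsTree ∧
  (∀ v : V, ∃ i, v ∈ bag i) ∧
  (∀ u v : V, G.Adj u v → ∃ i, u ∈ bag i ∧ v ∈ bag i) ∧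
  (∀ v : V, (T.induce {i | v ∈ bag i}).Connected)

/-- The treewidth of `G`: the least `w` such that `G` admits a tree decomposition all of whose
bags have at most `w + 1` vertices (i.e. of width at most `w`). -/
noncomputable def treewidth {V : Type} (G : SimpleGraph V) : ℕ :=
  sInf {w : ℕ | ∃ (n : ℕ) (T : SimpleGraph (Fin n)) (bag : Fin n → Finset V),
    IsTreeDecomp G T bag ∧ ∀ i, (bag i).card ≤ w + 1}

/-- The pathwidth of `G`: the least `w` such that `G` admits a tree decomposition along a path
all of whose bags have at most `w + 1` vertices (i.e. a path decomposition of width at most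
`w`). -/
noncomputable def pathwidth {V : Type} (G : SimpleGraph V) : ℕ :=
  sInf {w : ℕ | ∃ (n : ℕ) (bag : Fin n → Finset V),
    IsTreeDecomp G (SimpleGraph.pathGraph n) bag ∧ ∀ i, (bag i).card ≤ w + 1}

/-- The `k × k` grid graph: vertices are pairs in `Fin k × Fin k`, two vertices being adjacent
if and only if they agree in one coordinate and differ by exactly `1` in the other. -/
def gridGraph (k : ℕ) : SimpleGraph (Fin k × Fin k) :=
  SimpleGraph.fromRel (fun a b =>
    (a.1 = b.1 ∧ (a.2 : ℕ) + 1 = (b.2 : ℕ)) ∨ ((a.1 : ℕ) + 1 = (b.1 : ℕ) ∧ a.2 = b.2))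

/-!
For the upper bound, list the vertices row by row: adjacent vertices are at most `k` apart, so
the windows of `k + 1` consecutive vertices form a path decomposition of width `k`.

For the lower bound, take the bramble formed by the crosses (row `i` together with column `j`,
inside the top-left `(k - 1) × (k - 1)` block), the bottom row, and the right column without its
corner: these sets are connected and pairwise touch. In a path decomposition the bags meeting a
connected set form an interval, and pairwise intersecting intervals of a line share a point, so
one bag meets every set of the bramble. That bag either meets every column of the block or misses
some column `j`, and then meets every row of the block through the crosses at column `j`; this
gives `k - 1` vertices in the block, plus one in the bottom row and one in the right column.
-/

open Finset SimpleGraph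

namespace SimpleGraph

variable {V W : Type*} {G : SimpleGraph V} {H : SimpleGraph W}

lemma Connected.induce_image (f : G →g H) {s : Set V} (hs : (G.induce s).Connected) :
    (H.induce (f '' s)).Connected :=
  hs.map (induceHom f (s.mapsTo_image f)) <| by
    rintro ⟨_, x, hx, rfl⟩
    exact ⟨⟨x, hx⟩, rfl⟩

lemma Connected.exists_walk_support_subset {s : Set V} (hs : (G.induce s).Connected) {u v : V}
    (hu : u ∈ s) (hv : v ∈ s) : ∃ p : G.Walk u v, ∀ x ∈ p.support, x ∈ s := by
  obtain ⟨p⟩ := hs.preconnected ⟨u, hu⟩ ⟨v, hv⟩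
  refine ⟨p.map (Embedding.induce s).toHom, fun x hx => ?_⟩
  obtain ⟨y, -, rfl⟩ := List.mem_map.mp (Walk.support_map _ p ▸ hx)
  exact y.2

variable {n : ℕ}

lemma pathGraph_mem_support_of_le {a b t : Fin n} (p : (pathGraph n).Walk a b)
    (hat : a ≤ t) (htb : t ≤ b) : t ∈ p.support := by
  rcases hat.eq_or_lt with rfl | hlt
  · exact p.start_mem_support
  -- the first step out of `{x | x < t}` lands on `t`
  obtain ⟨d, hd, hfst, hsnd⟩ := p.exists_boundary_dart {x | x < t} hlt (by simpa using htb)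
  have hdt : d.snd = t := by
    have := pathGraph_adj.mp d.adj
    simp only [Set.mem_ofPred_eq, not_lt, Fin.lt_def] at hfst hsnd
    exact Fin.ext (by omega)
  exact hdt ▸ p.dart_snd_mem_support_of_mem_darts hd

lemma pathGraph_isAcyclic : (pathGraph n).IsAcyclic := by
  refine isAcyclic_iff_forall_adj_isBridge.mpr fun a b hab => ?_
  wlog hlt : a < b generalizing a b
  · rw [Sym2.eq_swap]
    exact this b a hab.symm (hab.ne.lt_or_gt.resolve_left hlt)
  rw [isBridge_iff]
  rintro ⟨p⟩
  -- only the deleted edge leaves `{x | x ≤ a}`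
  obtain ⟨d, hd, hfst, hsnd⟩ :=
    p.exists_boundary_dart {x | x ≤ a} (le_refl a) (by simpa using hlt)
  have hadj := d.adj
  simp only [deleteEdges_adj, Set.mem_singleton_iff] at hadj
  simp only [Set.mem_ofPred_eq, not_le, Fin.lt_def, Fin.le_def] at hfst hsnd hlt
  have hab := pathGraph_adj.mp hab
  have hd' := pathGraph_adj.mp hadj.1
  apply hadj.2
  rw [Fin.ext (by omega : d.fst.val = a.val), Fin.ext (by omega : d.snd.val = b.val)]

lemma pathGraph_isTree [NeZero n] : (pathGraph n).IsTree :=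
  ⟨⟨pathGraph_preconnected n⟩, pathGraph_isAcyclic⟩

lemma ordConnected_of_preconnected_induce_pathGraph {s : Set (Fin n)}
    (hs : ((pathGraph n).induce s).Preconnected) : s.OrdConnected := by
  refine ⟨fun a ha b hb t ht => ?_⟩
  obtain ⟨p⟩ := hs ⟨a, ha⟩ ⟨b, hb⟩
  have ht := pathGraph_mem_support_of_le (p.map (Embedding.induce s).toHom) ht.1 ht.2
  obtain ⟨y, -, rfl⟩ := List.mem_map.mp (Walk.support_map _ p ▸ ht)
  exact y.2

lemma connected_induce_pathGraph_of_ordConnected {s : Set (Fin n)} (hs : s.OrdConnected)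
    (hne : s.Nonempty) : ((pathGraph n).induce s).Connected := by
  have key : ∀ {a : Fin n} (ha : a ∈ s) (m : ℕ) (hm : m < n) (hms : ⟨m, hm⟩ ∈ s),
      a.val ≤ m → ((pathGraph n).induce s).Reachable ⟨a, ha⟩ ⟨⟨m, hm⟩, hms⟩ := by
    intro a ha m
    induction m with
    | zero =>
      intro hm hms ha0
      obtain rfl : a = ⟨0, hm⟩ := Fin.ext (Nat.le_zero.mp ha0)
      rfl
    | succ m ih =>
      intro hm hms hle
      rcases hle.eq_or_lt with h | h
      · obtain rfl : a = ⟨m + 1, hm⟩ := Fin.ext h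
        rfl
      have hms' : (⟨m, by omega⟩ : Fin n) ∈ s :=
        hs.out ha hms ⟨Fin.le_def.mpr (show a.val ≤ m by omega), Fin.le_def.mpr m.le_succ⟩
      refine (ih _ hms' (by omega)).trans (Adj.reachable ?_)
      simp [pathGraph_adj]
  have := hne.to_subtype
  refine ⟨fun x y => ?_⟩
  rcases le_total x.1 y.1 with h | h
  · exact key x.2 _ _ y.2 h
  · exact (key y.2 _ _ x.2 h).symm

end SimpleGraph

lemma Finset.exists_forall_mem_of_ordConnected {ι α : Type*} [Finite ι] [Nonempty ι]
    [LinearOrder α] (I : ι → Finset α) (hne : ∀ i, (I i).Nonempty)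
    (hI : ∀ i, (I i : Set α).OrdConnected) (hpair : ∀ i j, ∃ t ∈ I i, t ∈ I j) :
    ∃ t, ∀ i, t ∈ I i := by
  -- the largest left endpoint lies in every interval
  obtain ⟨i₀, hi₀⟩ := Finite.exists_max fun i => (I i).min' (hne i)
  refine ⟨(I i₀).min' (hne i₀), fun i => ?_⟩
  obtain ⟨t, hti, hti₀⟩ := hpair i i₀
  exact (hI i).out (min'_mem _ _) hti ⟨hi₀ i, min'_le _ _ hti₀⟩

lemma Fintype.card_le_card_of_forall_exists_apply_eq {ι α β : Type*} [Fintype ι]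
    {s : Finset α} (π : α → β) (e : ι ↪ β) (h : ∀ i, ∃ x ∈ s, π x = e i) :
    Fintype.card ι ≤ #s :=
  calc Fintype.card ι = #(univ.map e) := by simp
    _ ≤ #s := card_le_card_of_surjOn π <| by
      rintro _ hb
      obtain ⟨i, -, rfl⟩ := mem_map.mp hb
      exact h i

def SimpleGraph.Touches {V : Type*} (G : SimpleGraph V) (A B : Set V) : Prop :=
  ∃ u ∈ A, ∃ v ∈ B, u = v ∨ G.Adj u v

namespace IsTreeDecomp

variable {V : Type} {G : SimpleGraph V} {n : ℕ} {bag : Fin n → Finset V}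

lemma ordConnected_setOf_mem (hd : IsTreeDecomp G (pathGraph n) bag) (v : V) :
    {t | v ∈ bag t}.OrdConnected :=
  ordConnected_of_preconnected_induce_pathGraph (hd.2.2.2 v).preconnected

lemma exists_mem_support_mem_bag (hd : IsTreeDecomp G (pathGraph n) bag) {u v : V}
    (p : G.Walk u v) {t₁ t₂ t : Fin n} (hu : u ∈ bag t₁) (hv : v ∈ bag t₂)
    (h₁ : t₁ ≤ t) (h₂ : t ≤ t₂) : ∃ x ∈ p.support, x ∈ bag t := by
  induction p generalizing t₁ with
  | nil => exact ⟨_, by simp, (hd.ordConnected_setOf_mem _).out hu hv ⟨h₁, h₂⟩⟩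
  | @cons u w v huw p ih =>
    obtain ⟨s, hus, hws⟩ := hd.2.2.1 u w huw
    rcases le_total t s with hts | hst
    · exact ⟨u, by simp, (hd.ordConnected_setOf_mem u).out hu hus ⟨h₁, hts⟩⟩
    · obtain ⟨x, hx, hxt⟩ := ih hws hv hst
      exact ⟨x, by simp [hx], hxt⟩

lemma ordConnected_setOf_exists_mem (hd : IsTreeDecomp G (pathGraph n) bag) {S : Set V}
    (hS : (G.induce S).Connected) : {t | ∃ x ∈ S, x ∈ bag t}.OrdConnected := by
  refine ⟨fun t₁ ⟨u, huS, hu⟩ t₂ ⟨v, hvS, hv⟩ t ht => ?_⟩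
  obtain ⟨p, hpS⟩ := hS.exists_walk_support_subset huS hvS
  obtain ⟨x, hx, hxt⟩ := hd.exists_mem_support_mem_bag p hu hv ht.1 ht.2
  exact ⟨x, hpS x hx, hxt⟩

theorem exists_bag_meets_of_touches (hd : IsTreeDecomp G (pathGraph n) bag) {ι : Type*}
    [Finite ι] [Nonempty ι] (B : ι → Set V) (hB : ∀ i, (G.induce (B i)).Connected)
    (htouch : ∀ i j, G.Touches (B i) (B j)) : ∃ t, ∀ i, ∃ x ∈ B i, x ∈ bag t := by
  classical
  let I i : Finset (Fin n) := {t | ∃ x ∈ B i, x ∈ bag t}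
  have mem_I {i t} : t ∈ I i ↔ ∃ x ∈ B i, x ∈ bag t := by simp [I]
  have hne i : (I i).Nonempty := by
    obtain ⟨⟨x, hx⟩⟩ := (hB i).nonempty
    obtain ⟨t, ht⟩ := hd.2.1 x
    exact ⟨t, mem_I.mpr ⟨x, hx, ht⟩⟩
  have hpair i j : ∃ t ∈ I i, t ∈ I j := by
    obtain ⟨u, hu, v, hv, rfl | huv⟩ := htouch i j
    · obtain ⟨t, ht⟩ := hd.2.1 u
      exact ⟨t, mem_I.mpr ⟨u, hu, ht⟩, mem_I.mpr ⟨u, hv, ht⟩⟩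
    · obtain ⟨t, hut, hvt⟩ := hd.2.2.1 u v huv
      exact ⟨t, mem_I.mpr ⟨u, hu, hut⟩, mem_I.mpr ⟨v, hv, hvt⟩⟩
  have hI i : (I i : Set (Fin n)).OrdConnected := by
    convert hd.ordConnected_setOf_exists_mem (hB i)
    ext; exact mem_I
  obtain ⟨t, ht⟩ := Finset.exists_forall_mem_of_ordConnected I hne hI hpair
  exact ⟨t, fun i => mem_I.mp (ht i)⟩

end IsTreeDecomp

theorem exists_pathDecomp_of_bandwidth_le {V : Type} [Fintype V] [Nonempty V]
    {G : SimpleGraph V} {N w : ℕ} (f : V ↪ Fin N)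
    (hf : ∀ u v, G.Adj u v → (f v : ℕ) ≤ f u + w) :
    ∃ (n : ℕ) (bag : Fin n → Finset V),
      IsTreeDecomp G (pathGraph n) bag ∧ ∀ t, #(bag t) ≤ w + 1 := by
  classical
  have : NeZero N := ⟨fun h => (h ▸ f (Classical.arbitrary V)).elim0⟩
  let bag (t : Fin N) : Finset V := {v | (t : ℕ) ≤ f v ∧ (f v : ℕ) ≤ t + w}
  have mem_bag {v t} : v ∈ bag t ↔ (t : ℕ) ≤ f v ∧ (f v : ℕ) ≤ t + w := by simp [bag]
  refine ⟨N, bag, ⟨pathGraph_isTree, fun v => ⟨f v, by simp [mem_bag]⟩, fun u v huv => ?_,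
    fun v => ?_⟩, fun t => ?_⟩
  · have := hf u v huv
    have := hf v u huv.symm
    rcases le_total (f u) (f v) with h | h
    · exact ⟨f u, mem_bag.mpr ⟨le_rfl, by omega⟩, mem_bag.mpr ⟨h, by omega⟩⟩
    · exact ⟨f v, mem_bag.mpr ⟨h, by omega⟩, mem_bag.mpr ⟨le_rfl, by omega⟩⟩
  · refine connected_induce_pathGraph_of_ordConnected ⟨fun a ha b hb t ht => ?_⟩
      ⟨f v, mem_bag.mpr (by simp)⟩
    have := ht.1; have := ht.2
    simp only [Set.mem_ofPred_eq, mem_bag, Fin.le_def] at *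
    omega
  · calc #(bag t) ≤ #(Icc (t : ℕ) (t + w)) :=
          card_le_card_of_injOn (fun v => (f v : ℕ)) (fun v hv => by simpa using mem_bag.mp hv)
            fun u _ v _ huv => f.injective (Fin.ext huv)
      _ = w + 1 := by simp; omega

theorem pathwidth_eq_of_bounds {V : Type} {G : SimpleGraph V} {w : ℕ}
    (hle : ∃ (n : ℕ) (bag : Fin n → Finset V),
      IsTreeDecomp G (pathGraph n) bag ∧ ∀ t, #(bag t) ≤ w + 1)
    (hge : ∀ (n : ℕ) (bag : Fin n → Finset V),
      IsTreeDecomp G (pathGraph n) bag → ∃ t, w + 1 ≤ #(bag t)) :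
    pathwidth G = w := by
  refine le_antisymm (Nat.sInf_le hle) ?_
  have hmem : pathwidth G ∈ _ := Nat.sInf_mem ⟨w, hle⟩
  obtain ⟨n, bag, hd, hbag⟩ := hmem
  obtain ⟨t, ht⟩ := hge n bag hd
  have := hbag t
  omega

lemma gridGraph_eq_boxProd (k : ℕ) : gridGraph k = pathGraph k □ pathGraph k := by
  ext a b
  simp only [gridGraph, fromRel_adj, boxProd_adj, pathGraph_adj, ne_eq, Prod.ext_iff, Fin.ext_iff]
  omega

lemma gridGraph_exists_pathDecomp (k : ℕ) [NeZero k] :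
    ∃ (n : ℕ) (bag : Fin n → Finset (Fin k × Fin k)),
      IsTreeDecomp (gridGraph k) (pathGraph n) bag ∧ ∀ t, #(bag t) ≤ k + 1 := by
  refine exists_pathDecomp_of_bandwidth_le finProdFinEquiv.toEmbedding fun u v huv => ?_
  rw [gridGraph_eq_boxProd, boxProd_adj, pathGraph_adj, pathGraph_adj] at huv
  simp only [Equiv.coe_toEmbedding, finProdFinEquiv_apply_val]
  rcases huv with ⟨h | h, h₂⟩ | ⟨h | h, h₁⟩
  · rw [← h, h₂, mul_add]; omega
  · rw [← h, h₂, mul_add]; omega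
  · rw [h₁]; omega
  · rw [h₁]; omega

lemma gridGraph_connected_induce_row {k : ℕ} (i : Fin k) {s : Set (Fin k)}
    (hs : ((pathGraph k).induce s).Connected) : ((gridGraph k).induce ({i} ×ˢ s)).Connected := by
  rw [gridGraph_eq_boxProd, Set.singleton_prod]
  exact hs.induce_image (boxProdRight _ _ i).toHom

lemma gridGraph_connected_induce_column {k : ℕ} (j : Fin k) {s : Set (Fin k)}
    (hs : ((pathGraph k).induce s).Connected) : ((gridGraph k).induce (s ×ˢ {j})).Connected := by
  rw [gridGraph_eq_boxProd, Set.prod_singleton]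
  exact hs.induce_image (boxProdLeft _ _ j).toHom

def gridBramble (m : ℕ) :
    (Fin (m + 1) × Fin (m + 1)) ⊕ Bool → Set (Fin (m + 2) × Fin (m + 2))
  | .inl (i, j) => {i.castSucc} ×ˢ Set.Iio (Fin.last _) ∪ Set.Iio (Fin.last _) ×ˢ {j.castSucc}
  | .inr false => {Fin.last _} ×ˢ Set.univ
  | .inr true => Set.Iio (Fin.last _) ×ˢ {Fin.last _}

lemma gridBramble_connected (m : ℕ) (s : (Fin (m + 1) × Fin (m + 1)) ⊕ Bool) :
    ((gridGraph (m + 2)).induce (gridBramble m s)).Connected := by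
  have hIio : ((pathGraph (m + 2)).induce (Set.Iio (Fin.last _))).Connected :=
    connected_induce_pathGraph_of_ordConnected Set.ordConnected_Iio ⟨0, Fin.last_pos⟩
  rcases s with ⟨i, j⟩ | _ | _
  · exact induce_union_connected (gridGraph_connected_induce_row _ hIio).preconnected
      (gridGraph_connected_induce_column _ hIio).preconnected
      ⟨(i.castSucc, j.castSucc), by simp, by simp⟩
  · exact gridGraph_connected_induce_row _
      (connected_induce_pathGraph_of_ordConnected Set.ordConnected_univ Set.univ_nonempty)
  · exact gridGraph_connected_induce_column _ hIio

lemma gridBramble_touches (m : ℕ) (s s' : (Fin (m + 1) × Fin (m + 1)) ⊕ Bool) :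
    (gridGraph (m + 2)).Touches (gridBramble m s) (gridBramble m s') := by
  have hadj : (pathGraph (m + 2)).Adj (Fin.last m).castSucc (Fin.last (m + 1)) := by
    simp [pathGraph_adj]
  rw [gridGraph_eq_boxProd]
  rcases s with ⟨i, j⟩ | _ | _ <;> rcases s' with ⟨i', j'⟩ | _ | _
  · exact ⟨(i.castSucc, j'.castSucc), by simp [gridBramble], _, by simp [gridBramble],
      .inl rfl⟩
  · exact ⟨_, by simp [gridBramble], (Fin.last _, j.castSucc), by simp [gridBramble],
      .inr (boxProd_adj_left.mpr hadj)⟩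
  · exact ⟨_, by simp [gridBramble], (i.castSucc, Fin.last _), by simp [gridBramble],
      .inr (boxProd_adj_right.mpr hadj)⟩
  · exact ⟨(Fin.last _, j'.castSucc), by simp [gridBramble], _, by simp [gridBramble],
      .inr (boxProd_adj_left.mpr hadj.symm)⟩
  · exact ⟨(Fin.last _, Fin.last _), by simp [gridBramble], _, by simp [gridBramble], .inl rfl⟩
  · exact ⟨(Fin.last _, Fin.last _), by simp [gridBramble], _, by simp [gridBramble],
      .inr (boxProd_adj_left.mpr hadj.symm)⟩
  · exact ⟨(i'.castSucc, Fin.last _), by simp [gridBramble], _, by simp [gridBramble],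
      .inr (boxProd_adj_right.mpr hadj.symm)⟩
  · exact ⟨_, by simp [gridBramble], (Fin.last _, Fin.last _), by simp [gridBramble],
      .inr (boxProd_adj_left.mpr hadj)⟩
  · exact ⟨((Fin.last m).castSucc, Fin.last _), by simp [gridBramble], _, by simp [gridBramble],
      .inl rfl⟩

lemma gridBramble_card_le {m : ℕ} {H : Finset (Fin (m + 2) × Fin (m + 2))}
    (hH : ∀ s, ∃ x ∈ gridBramble m s, x ∈ H) : m + 3 ≤ #H := by
  classical
  let S := H.filter fun x => x.1 < Fin.last _ ∧ x.2 < Fin.last _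
  have hS : m + 1 ≤ #S := by
    by_cases hcol : ∀ j : Fin (m + 1), ∃ x ∈ S, x.2 = j.castSucc
    · simpa using Fintype.card_le_card_of_forall_exists_apply_eq Prod.snd Fin.castSuccEmb hcol
    push Not at hcol
    obtain ⟨j, hj⟩ := hcol
    suffices hrow : ∀ i : Fin (m + 1), ∃ x ∈ S, x.1 = i.castSucc by
      simpa using Fintype.card_le_card_of_forall_exists_apply_eq Prod.fst Fin.castSuccEmb hrow
    -- `S` misses column `j`, so it meets each cross through that column in its row
    intro i
    obtain ⟨x, hx, hxH⟩ := hH (.inl (i, j))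
    simp only [gridBramble, Set.mem_union, Set.mem_prod, Set.mem_singleton_iff,
      Set.mem_Iio] at hx
    rcases hx with ⟨h₁, h₂⟩ | ⟨h₁, h₂⟩
    · exact ⟨x, mem_filter.mpr ⟨hxH, h₁ ▸ Fin.castSucc_lt_last _, h₂⟩, h₁⟩
    · exact absurd h₂ (hj x (mem_filter.mpr ⟨hxH, h₁, h₂ ▸ Fin.castSucc_lt_last _⟩))
  obtain ⟨b, hb, hbH⟩ := hH (.inr false)
  obtain ⟨r, hr, hrH⟩ := hH (.inr true)
  simp only [gridBramble, Set.mem_prod, Set.mem_singleton_iff, Set.mem_univ, and_true,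
    Set.mem_Iio] at hb hr
  have hrS : r ∉ S := by simp [S, hr.2]
  have hbrS : b ∉ insert r S := by
    simp only [mem_insert, mem_filter, S, hb, lt_irrefl, false_and, and_false, or_false]
    rintro rfl
    exact (hb ▸ hr.1).false
  calc m + 3 ≤ #(insert b (insert r S)) := by
        rw [card_insert_of_notMem hbrS, card_insert_of_notMem hrS]; omega
    _ ≤ #H := card_le_card <| insert_subset hbH <| insert_subset hrH <| filter_subset _ _

lemma gridGraph_exists_card_bag_ge {m n : ℕ} {bag : Fin n → Finset (Fin (m + 2) × Fin (m + 2))}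
    (hd : IsTreeDecomp (gridGraph (m + 2)) (pathGraph n) bag) : ∃ t, m + 3 ≤ #(bag t) := by
  obtain ⟨t, ht⟩ := hd.exists_bag_meets_of_touches (gridBramble m) (gridBramble_connected m)
    (gridBramble_touches m)
  exact ⟨t, gridBramble_card_le ht⟩

/-- For every `k ≥ 2`, the `k × k` grid graph has pathwidth exactly `k`. -/
theorem pathwidth_gridGraph (k : ℕ) (hk : 2 ≤ k) : pathwidth (gridGraph k) = k := by
  obtain ⟨m, rfl⟩ : ∃ m, k = m + 2 := ⟨k - 2, by omega⟩
  exact pathwidth_eq_of_bounds (gridGraph_exists_pathDecomp _)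
    fun _ _ hd => gridGraph_exists_card_bag_ge hd
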